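/- Two 𝒜-trees T₁ and T₂ are ancestrally compatible (there exists an 𝒜-tree that ancestrally displays both) if and only if they have a common weak 𝒜-supertree, that is, if and only if there exist weak topological embeddings of T₁ and of T₂ into a same 𝒜-tree. -/

import Mathlib

/-!
If `T` ancestrally displays `T₁`, send each node `v` of `T₁` to the lowest node of `T` whose
cluster contains `𝒜_{T₁}(v)`. The display conditions make this map label-preserving and make the
cluster of the image, restricted to `𝒜(T₁)`, equal to `𝒜_{T₁}(v)`; hence ancestry is preserved
and reflected, except that the nodes of a chain of `T₁` with equal clusters all land on the same
node of `T`. So replace every node of `T` by a chain of `k` copies, with `k` at least the number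
of nodes of `T₁` and of `T₂`, and send `v` to the copy indexed by the number of nodes below `v`
with the same cluster: this is a weak topological embedding, for `T₁` and `T₂` alike.
Conversely, a weak topological embedding into `T` transports paths, labels and clusters, so `T`
ancestrally displays the embedded tree.
-/

/-!
Common framework: rooted labeled trees ("𝒜-trees") following Llabrés–Rocha–Rosselló–Valiente.

A `PreTree α V` is the raw data of a directed graph on (a finite subset of) `V` together with
a partial labeling of its nodes by labels in `α`.  The predicate `PreTree.IsATree` asserts that
this data is a finite rooted tree (the root reaches every node by a unique directed path),
that the labeling is injective, and that every leaf is labeled.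
-/

structure PreTree (α : Type) (V : Type) where
  nodes : Set V
  arc : V → V → Prop
  label : V → Option α

namespace PreTree

variable {α V W : Type}

/-- There is a directed path from `u` to `v` (possibly trivial). -/
def path (T : PreTree α V) (u v : V) : Prop := Relation.ReflTransGen T.arc u v

/-- There is a non-trivial directed path (length ≥ 1) from `u` to `v`. -/
def pathNT (T : PreTree α V) (u v : V) : Prop := Relation.TransGen T.arc u v

/-- `𝒜(T)`: the set of labels of all nodes of `T`. -/
def labelSet (T : PreTree α V) : Set α := {a | ∃ v, T.label v = some a}

/-- `𝒜_T(v)`: the cluster of `v`, i.e. the set of labels of all descendants of `v`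
(including `v` itself). -/
def cluster (T : PreTree α V) (v : V) : Set α := {a | ∃ w, T.path v w ∧ T.label w = some a}

/-- `𝒞_𝒜(T)`: the cluster representation of `T`. -/
def clusterRep (T : PreTree α V) : Set (Set α) := {C | ∃ v ∈ T.nodes, T.cluster v = C}

/-- A leaf is a node without children. -/
def IsLeaf (T : PreTree α V) (v : V) : Prop := v ∈ T.nodes ∧ ∀ w, ¬ T.arc v w

/-- `ℒ(T)`: the set of labels of the leaves of `T`. -/
def leafLabels (T : PreTree α V) : Set α := {a | ∃ v, T.IsLeaf v ∧ T.label v = some a}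

/-- A node is elementary when it has exactly one child. -/
def IsElementary (T : PreTree α V) (v : V) : Prop := ∃! w, T.arc v w

/-- `T` is an 𝒜-tree: a finite rooted tree (every node reachable from the root by a unique
directed path, which is captured by unique parents, acyclicity and reachability from a root)
with an injective partial labeling such that every leaf is labeled. -/
structure IsATree (T : PreTree α V) : Prop where
  finite_nodes : T.nodes.Finite
  arc_mem_left : ∀ {u v : V}, T.arc u v → u ∈ T.nodes
  arc_mem_right : ∀ {u v : V}, T.arc u v → v ∈ T.nodes
  parent_unique : ∀ {u v w : V}, T.arc u w → T.arc v w → u = v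
  acyclic : ∀ {u v : V}, T.arc u v → ¬ T.path v u
  rooted : T.nodes.Nonempty → ∃ r ∈ T.nodes, ∀ v ∈ T.nodes, T.path r v
  label_mem : ∀ {v : V} {a : α}, T.label v = some a → v ∈ T.nodes
  label_inj : ∀ {u v : V} {a : α}, T.label u = some a → T.label v = some a → u = v
  leaf_labeled : ∀ v ∈ T.nodes, (∀ w, ¬ T.arc v w) → ∃ a, T.label v = some a

/-- A semi-labeled tree over `𝒜` is an 𝒜-tree all of whose elementary nodes are labeled. -/
def IsSemiLabeled (T : PreTree α V) : Prop :=
  T.IsATree ∧ ∀ v ∈ T.nodes, T.IsElementary v → ∃ a, T.label v = some a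

open Classical in
/-- The restriction `T|X`: the subtree of `T` induced on the nodes whose cluster meets `X`,
keeping exactly the labels that belong to `X`. -/
noncomputable def restrict (T : PreTree α V) (X : Set α) : PreTree α V where
  nodes := {v | v ∈ T.nodes ∧ (T.cluster v ∩ X).Nonempty}
  arc u v := T.arc u v ∧ (T.cluster u ∩ X).Nonempty ∧ (T.cluster v ∩ X).Nonempty
  label v := if (∃ a ∈ X, T.label v = some a) then T.label v else none

/-- A weak topological embedding `f : S → T`: an injective map on nodes which preserves labels
and preserves and reflects directed paths. -/
def IsWTE (S : PreTree α V) (T : PreTree α W) (f : V → W) : Prop :=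
  (∀ v ∈ S.nodes, f v ∈ T.nodes) ∧
  (∀ u ∈ S.nodes, ∀ v ∈ S.nodes, f u = f v → u = v) ∧
  (∀ (v : V) (a : α), S.label v = some a → T.label (f v) = some a) ∧
  (∀ u ∈ S.nodes, ∀ v ∈ S.nodes, (S.path u v ↔ T.path (f u) (f v)))

/-- Two 𝒜-trees are ancestrally compatible when they admit weak topological embeddings into
a same 𝒜-tree. -/
def AncCompat (T₁ : PreTree α V) (T₂ : PreTree α W) : Prop :=
  ∃ (U : Type) (T : PreTree α U), T.IsATree ∧ (∃ f, IsWTE T₁ T f) ∧ (∃ g, IsWTE T₂ T g)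

/-- `m` is the most recent common ancestor of `x` and `y` in `T`. -/
def IsMRCA (T : PreTree α V) (x y m : V) : Prop :=
  T.path m x ∧ T.path m y ∧ ∀ n, T.path n x → T.path n y → T.path n m

/-- Local compatibility: condition (C1) on pairs of common labels and condition (C2)
on triples of common labels. -/
def LocallyCompatible (T₁ : PreTree α V) (T₂ : PreTree α W) : Prop :=
  (∀ (a b : α) (x₁ y₁ : V) (x₂ y₂ : W),
      T₁.label x₁ = some a → T₁.label y₁ = some b →
      T₂.label x₂ = some a → T₂.label y₂ = some b →
      (T₁.path x₁ y₁ ↔ T₂.path x₂ y₂)) ∧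
  (∀ (a b c : α) (va₁ vb₁ vc₁ m₁ m₁' : V) (va₂ vb₂ vc₂ m₂ m₂' : W),
      T₁.label va₁ = some a → T₁.label vb₁ = some b → T₁.label vc₁ = some c →
      T₂.label va₂ = some a → T₂.label vb₂ = some b → T₂.label vc₂ = some c →
      IsMRCA T₁ vb₁ vc₁ m₁ → IsMRCA T₁ va₁ vb₁ m₁' →
      IsMRCA T₂ va₂ vb₂ m₂ → IsMRCA T₂ vb₂ vc₂ m₂' →
      T₁.pathNT m₁ m₁' → ¬ T₂.pathNT m₂ m₂')

/-- `T` ancestrally displays `S`. -/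
def Displays (T : PreTree α W) (S : PreTree α V) : Prop :=
  S.labelSet ⊆ T.labelSet ∧
  (∀ (a b : α) (x y : V) (x' y' : W),
      S.label x = some a → S.label y = some b →
      T.label x' = some a → T.label y' = some b →
      (S.path x y ↔ T.path x' y')) ∧
  S.clusterRep ⊆ (T.restrict S.labelSet).clusterRep

/-- An unlabeled elementary node. -/
def ElemUnlab (T : PreTree α V) (v : V) : Prop := T.label v = none ∧ T.IsElementary v

/-- The semi-labeled tree obtained from `S` by removing its unlabeled elementary nodes and
replacing by single arcs the maximal paths all of whose intermediate nodes are unlabeled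
and elementary. -/
def contract (S : PreTree α V) : PreTree α V where
  nodes := {v | v ∈ S.nodes ∧ ¬ ElemUnlab S v}
  arc u v := (u ∈ S.nodes ∧ ¬ ElemUnlab S u) ∧ (v ∈ S.nodes ∧ ¬ ElemUnlab S v) ∧
    ∃ l : List V, List.Chain' S.arc (u :: (l ++ [v])) ∧ ∀ m ∈ l, ElemUnlab S m
  label := S.label

/-- `X` is the smallest member of the family `R` containing the label `a`. -/
def SmallestContaining (R : Set (Set α)) (a : α) (X : Set α) : Prop :=
  X ∈ R ∧ a ∈ X ∧ ∀ Y ∈ R, a ∈ Y → X ⊆ Y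

/-- `m_{ℓ,Y}`: the number of nodes of `T` whose cluster is `Y`. -/
noncomputable def mcount (T : PreTree α V) (Y : Set α) : ℕ :=
  {v | v ∈ T.nodes ∧ T.cluster v = Y}.ncard

/-- `𝒞 = 𝒞_𝒜(T₁) ∪ 𝒞_𝒜(T₂)`. -/
def joinC (T₁ : PreTree α V) (T₂ : PreTree α W) : Set (Set α) :=
  T₁.clusterRep ∪ T₂.clusterRep

/-- `n_Y = max (m_{1,Y}, m_{2,Y})`. -/
noncomputable def joinN (T₁ : PreTree α V) (T₂ : PreTree α W) (Y : Set α) : ℕ :=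
  max (mcount T₁ Y) (mcount T₂ Y)

open Classical in
/-- The join `T_{1,2}` of two 𝒜-trees with the same label set: nodes are the pairs
`w_{Y,j} = (Y, j)` with `Y ∈ 𝒞` and `1 ≤ j ≤ n_Y`, with the chain arcs `(w_{Y,j}, w_{Y,j-1})`
and the arcs `(w_{Y,1}, w_{Z,n_Z})` for `Z ⊊ Y` maximal in `𝒞`, and `w_{Y,1}` labeled `A`
exactly when `Y = (⋃ {Z ∈ 𝒞 ∣ Z ⊊ Y}) ⊔ {A}`. -/
noncomputable def join (T₁ : PreTree α V) (T₂ : PreTree α W) : PreTree α (Set α × ℕ) where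
  nodes := {p | p.1 ∈ joinC T₁ T₂ ∧ 1 ≤ p.2 ∧ p.2 ≤ joinN T₁ T₂ p.1}
  arc p q := p.1 ∈ joinC T₁ T₂ ∧ q.1 ∈ joinC T₁ T₂ ∧
    ((q.1 = p.1 ∧ p.2 = q.2 + 1 ∧ 1 ≤ q.2 ∧ p.2 ≤ joinN T₁ T₂ p.1) ∨
     (p.2 = 1 ∧ q.1 ⊂ p.1 ∧ q.2 = joinN T₁ T₂ q.1 ∧ 1 ≤ q.2 ∧
       ¬ ∃ Z ∈ joinC T₁ T₂, q.1 ⊂ Z ∧ Z ⊂ p.1))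
  label p :=
    if h : p.2 = 1 ∧ p.1 ∈ joinC T₁ T₂ ∧
        ∃ a : α, a ∉ ⋃₀ {Z ∈ joinC T₁ T₂ | Z ⊂ p.1} ∧
          p.1 = (⋃₀ {Z ∈ joinC T₁ T₂ | Z ⊂ p.1}) ∪ {a}
    then some h.2.2.choose else none

/-- The canonical map `f_ℓ : V(T_ℓ) → V(T_{1,2})`, sending the `i`-th node (from the bottom)
of the chain of nodes of `T` with cluster `Y` to `w_{Y,i}`. -/
noncomputable def joinMap (T : PreTree α V) (v : V) : Set α × ℕ :=
  (T.cluster v, {u | u ∈ T.nodes ∧ T.cluster u = T.cluster v ∧ T.pathNT v u}.ncard + 1)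

variable {U : Type}

section Paths

variable {T : PreTree α V}

lemma IsATree.mem_of_path (hT : T.IsATree) {u v : V} (h : T.path u v) (hu : u ∈ T.nodes) :
    v ∈ T.nodes := by
  rcases h.cases_tail with rfl | ⟨_, _, hv⟩
  exacts [hu, hT.arc_mem_right hv]

lemma IsATree.mem_of_pathNT (hT : T.IsATree) {u v : V} (h : T.pathNT u v) : v ∈ T.nodes := by
  obtain ⟨_, _, hv⟩ := Relation.TransGen.tail'_iff.1 h
  exact hT.arc_mem_right hv

lemma IsATree.path_antisymm (hT : T.IsATree) {u v : V} (h : T.path u v) (h' : T.path v u) :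
    u = v := by
  rcases h.cases_head with rfl | ⟨_, hu, hv⟩
  exacts [rfl, (hT.acyclic hu (hv.trans h')).elim]

lemma IsATree.pathNT_irrefl (hT : T.IsATree) (v : V) : ¬ T.pathNT v v := fun h => by
  obtain ⟨_, hv, hc⟩ := Relation.TransGen.head'_iff.1 h
  exact hT.acyclic hv hc

lemma pathNT_of_path_of_ne {u v : V} (h : T.path u v) (hne : u ≠ v) : T.pathNT u v :=
  (Relation.reflTransGen_iff_eq_or_transGen.1 h).resolve_left hne.symm

lemma IsATree.path_total_of_path (hT : T.IsATree) {u v x : V} (hu : T.path u x)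
    (hv : T.path v x) : T.path u v ∨ T.path v u := by
  have hunique : Relator.RightUnique (Function.swap T.arc) := fun _ _ _ h h' =>
    hT.parent_unique h h'
  rcases Relation.ReflTransGen.total_of_right_unique hunique
    (Relation.reflTransGen_swap.2 hu) (Relation.reflTransGen_swap.2 hv) with h | h
  exacts [Or.inr (Relation.reflTransGen_swap.1 h), Or.inl (Relation.reflTransGen_swap.1 h)]

lemma cluster_subset_of_path {u v : V} (h : T.path u v) : T.cluster v ⊆ T.cluster u :=
  fun _ ⟨w, hw, hl⟩ => ⟨w, h.trans hw, hl⟩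

lemma cluster_subset_labelSet (v : V) : T.cluster v ⊆ T.labelSet :=
  fun _ ⟨w, _, hl⟩ => ⟨w, hl⟩

lemma IsATree.exists_deepest (hT : T.IsATree) {S : Set V} (hS : S ⊆ T.nodes) (hne : S.Nonempty) :
    ∃ t ∈ S, ∀ t' ∈ S, T.path t t' → t' = t := by
  have hfin : ∀ t ∈ S, {w | T.path t w}.Finite := fun t ht =>
    hT.finite_nodes.subset fun _ hw => hT.mem_of_path hw (hS ht)
  obtain ⟨t, ht, hmin⟩ := (hT.finite_nodes.subset hS).exists_minimalFor
    (fun t => {w | T.path t w}.ncard) S hne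
  refine ⟨t, ht, fun t' ht' htt' => ?_⟩
  have hsub : {w | T.path t' w} ⊆ {w | T.path t w} := fun _ hw => htt'.trans hw
  have heq := Set.eq_of_subset_of_ncard_le hsub
    (hmin ht' (Set.ncard_le_ncard hsub (hfin t ht))) (hfin t ht)
  have ht't : t ∈ {w | T.path t' w} := by
    rw [heq]
    exact .refl
  exact hT.path_antisymm ht't htt'

lemma IsATree.cluster_nonempty (hT : T.IsATree) {v : V} (hv : v ∈ T.nodes) :
    (T.cluster v).Nonempty := by
  obtain ⟨w, hvw, hdeep⟩ := hT.exists_deepest (S := {w | T.path v w})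
    (fun _ hw => hT.mem_of_path hw hv) ⟨v, .refl⟩
  obtain ⟨a, ha⟩ := hT.leaf_labeled w (hT.mem_of_path hvw hv) fun c hc => by
    refine hT.acyclic hc ?_
    rw [hdeep c (hvw.tail hc) (.single hc)]
    exact .refl
  exact ⟨a, w, hvw, ha⟩

lemma IsATree.path_or_path_of_cluster_subset (hT : T.IsATree) {u v : V} (hv : v ∈ T.nodes)
    (h : T.cluster v ⊆ T.cluster u) : T.path u v ∨ T.path v u := by
  obtain ⟨a, w, hvw, hw⟩ := hT.cluster_nonempty hv
  obtain ⟨w', huw', hw'⟩ := h ⟨w, hvw, hw⟩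
  exact hT.path_total_of_path (hT.label_inj hw' hw ▸ huw') hvw

end Paths

lemma restrict_cluster (T : PreTree α V) (X : Set α) (v : V) :
    (T.restrict X).cluster v = T.cluster v ∩ X := by
  classical
  ext a
  constructor
  · rintro ⟨w, hvw, hw⟩
    simp only [restrict] at hw
    split_ifs at hw with hX
    obtain ⟨b, hbX, hb⟩ := hX
    rw [hb] at hw
    cases hw
    exact ⟨⟨w, Relation.ReflTransGen.mono (p := T.arc) (fun _ _ h => h.1) _ _ hvw, hb⟩, hbX⟩
  · rintro ⟨⟨w, hvw, hw⟩, haX⟩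
    refine ⟨w, ?_, by simp only [restrict]; rw [if_pos ⟨a, haX, hw⟩, hw]⟩
    induction hvw using Relation.ReflTransGen.head_induction_on with
    | refl => exact .refl
    | head hbc hcw ih =>
      exact .head ⟨hbc, ⟨a, ⟨w, .head hbc hcw, hw⟩, haX⟩, ⟨a, ⟨w, hcw, hw⟩, haX⟩⟩ ih

lemma Displays.exists_cluster_eq {T : PreTree α U} {S : PreTree α V} (hd : Displays T S)
    {v : V} (hv : v ∈ S.nodes) : ∃ t ∈ T.nodes, T.cluster t ∩ S.labelSet = S.cluster v := by
  obtain ⟨t, ht, hcl⟩ := hd.2.2 ⟨v, hv, rfl⟩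
  exact ⟨t, ht.1, by rwa [restrict_cluster] at hcl⟩

lemma IsWTE.displays {T : PreTree α U} {S : PreTree α V} {f : V → U} (hT : T.IsATree)
    (hS : S.IsATree) (hf : IsWTE S T f) : Displays T S := by
  obtain ⟨hmem, -, hlab, hpath⟩ := hf
  have hcluster : ∀ v ∈ S.nodes, T.cluster (f v) ∩ S.labelSet = S.cluster v := by
    intro v hv
    ext a
    constructor
    · rintro ⟨⟨w, hw, hwa⟩, x, hx⟩
      rw [hT.label_inj hwa (hlab x a hx)] at hw
      exact ⟨x, (hpath v hv x (hS.label_mem hx)).2 hw, hx⟩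
    · rintro ⟨w, hvw, hw⟩
      exact ⟨⟨f w, (hpath v hv w (hS.mem_of_path hvw hv)).1 hvw, hlab w a hw⟩, w, hw⟩
  refine ⟨fun a ⟨v, hv⟩ => ⟨f v, hlab v a hv⟩, ?_, ?_⟩
  · intro a b x y x' y' hx hy hx' hy'
    rw [hT.label_inj hx' (hlab x a hx), hT.label_inj hy' (hlab y b hy)]
    exact hpath x (hS.label_mem hx) y (hS.label_mem hy)
  · rintro _ ⟨v, hv, rfl⟩
    refine ⟨f v, ⟨hmem v hv, ?_⟩, by rw [restrict_cluster, hcluster v hv]⟩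
    exact hcluster v hv ▸ hS.cluster_nonempty hv

lemma isATree_empty : (⟨∅, fun _ _ => False, fun _ => none⟩ : PreTree α W).IsATree where
  finite_nodes := Set.finite_empty
  arc_mem_left h := h.elim
  arc_mem_right h := h.elim
  parent_unique h := h.elim
  acyclic h := h.elim
  rooted h := absurd h Set.not_nonempty_empty
  label_mem h := (Option.some_ne_none _ h.symm).elim
  label_inj h := (Option.some_ne_none _ h.symm).elim
  leaf_labeled _ hv := hv.elim

lemma isWTE_of_nodes_eq_empty {S : PreTree α V} (hS : S.IsATree) (h : S.nodes = ∅)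
    (T : PreTree α W) (f : V → W) : IsWTE S T f := by
  have hv : ∀ v, v ∉ S.nodes := fun v => h ▸ Set.notMem_empty v
  exact ⟨fun v hv' => (hv v hv').elim, fun u hu => (hv u hu).elim,
    fun v _ hl => (hv v (hS.label_mem hl)).elim, fun u hu => (hv u hu).elim⟩

lemma Displays.nodes_eq_empty [IsEmpty U] {T : PreTree α U} {S : PreTree α V}
    (hd : Displays T S) (hS : S.IsATree) : S.nodes = ∅ :=
  Set.eq_empty_of_forall_notMem fun _ hv => by
    obtain ⟨a, w, -, hw⟩ := hS.cluster_nonempty hv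
    obtain ⟨t, -⟩ := hd.1 ⟨w, hw⟩
    exact isEmptyElim t

def IsLowestCover (T : PreTree α U) (s : Set α) (t : U) : Prop :=
  t ∈ T.nodes ∧ s ⊆ T.cluster t ∧ ∀ t' ∈ T.nodes, s ⊆ T.cluster t' → T.path t' t

/-- All nodes whose cluster contains `a` lie on the path from the root to the node labeled `a`,
so the deepest of them lies below all the others. -/
lemma IsATree.exists_isLowestCover {T : PreTree α U} (hT : T.IsATree) {s : Set α} {a : α}
    (ha : a ∈ s) (h : ∃ t ∈ T.nodes, s ⊆ T.cluster t) : ∃ t, IsLowestCover T s t := by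
  obtain ⟨t, ⟨ht, hst⟩, hdeep⟩ :=
    hT.exists_deepest (S := {t | t ∈ T.nodes ∧ s ⊆ T.cluster t}) (fun _ h => h.1) h
  refine ⟨t, ht, hst, fun t' ht' hst' => ?_⟩
  obtain ⟨w, htw, hw⟩ := hst ha
  obtain ⟨w', ht'w', hw'⟩ := hst' ha
  rcases hT.path_total_of_path (hT.label_inj hw' hw ▸ ht'w') htw with h | h
  · exact h
  · rw [hdeep t' ⟨ht', hst'⟩ h]
    exact .refl

noncomputable def lowestCover [Nonempty U] (T : PreTree α U) (s : Set α) : U :=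
  Classical.epsilon (IsLowestCover T s)

section LowestCover

variable {T : PreTree α U} {S : PreTree α V} {v : V} {t : U}

lemma Displays.isLowestCover_lowestCover [Nonempty U] (hd : Displays T S) (hT : T.IsATree)
    (hS : S.IsATree) (hv : v ∈ S.nodes) :
    IsLowestCover T (S.cluster v) (T.lowestCover (S.cluster v)) := by
  obtain ⟨a, ha⟩ := hS.cluster_nonempty hv
  obtain ⟨t, ht, hcl⟩ := hd.exists_cluster_eq hv
  exact Classical.epsilon_spec (hT.exists_isLowestCover ha ⟨t, ht, hcl ▸ Set.inter_subset_left⟩)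

lemma IsLowestCover.cluster_inter_labelSet (ht : IsLowestCover T (S.cluster v) t)
    (hd : Displays T S) (hv : v ∈ S.nodes) : T.cluster t ∩ S.labelSet = S.cluster v := by
  obtain ⟨t', ht', hcl⟩ := hd.exists_cluster_eq hv
  refine subset_antisymm ?_ (Set.subset_inter ht.2.1 (cluster_subset_labelSet v))
  calc T.cluster t ∩ S.labelSet ⊆ T.cluster t' ∩ S.labelSet :=
        Set.inter_subset_inter_left _
          (cluster_subset_of_path (ht.2.2 t' ht' (hcl ▸ Set.inter_subset_left)))
    _ = S.cluster v := hcl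

lemma IsLowestCover.label_eq (ht : IsLowestCover T (S.cluster v) t) (hT : T.IsATree)
    (hd : Displays T S) {a : α} (hv : S.label v = some a) : T.label t = some a := by
  obtain ⟨t', ht'⟩ := hd.1 ⟨v, hv⟩
  have hcover : S.cluster v ⊆ T.cluster t' := by
    rintro b ⟨w, hvw, hw⟩
    obtain ⟨tw, htw⟩ := hd.1 ⟨w, hw⟩
    exact ⟨tw, (hd.2.1 a b v w t' tw hv hw ht' htw).1 hvw, htw⟩
  obtain ⟨w, htw, hw⟩ := ht.2.1 (show a ∈ S.cluster v from ⟨v, .refl, hv⟩)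
  rw [hT.label_inj hw ht'] at htw
  rwa [← hT.path_antisymm (ht.2.2 t' (hT.label_mem ht') hcover) htw]

end LowestCover

def sameClusterBelow (T : PreTree α V) (v : V) : Set V :=
  {u | T.cluster u = T.cluster v ∧ T.pathNT v u}

noncomputable def chainRank (T : PreTree α V) (v : V) : ℕ :=
  (T.sameClusterBelow v).ncard

section ChainRank

variable {T : PreTree α V}

lemma IsATree.chainRank_lt_ncard (hT : T.IsATree) {s : Set V} {v : V} (hs : s.Finite)
    (hv : v ∈ s) (hsub : T.sameClusterBelow v ⊆ s) : T.chainRank v < s.ncard := by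
  have hv' : v ∉ T.sameClusterBelow v := fun h => hT.pathNT_irrefl v h.2
  calc T.chainRank v < (insert v (T.sameClusterBelow v)).ncard := by
        rw [Set.ncard_insert_of_notMem hv' (hs.subset hsub)]
        exact Nat.lt_succ_self _
    _ ≤ s.ncard := Set.ncard_le_ncard (Set.insert_subset hv hsub) hs

lemma IsATree.chainRank_lt (hT : T.IsATree) {u v : V} (hC : T.cluster u = T.cluster v)
    (huv : T.pathNT u v) : T.chainRank v < T.chainRank u :=
  hT.chainRank_lt_ncard (hT.finite_nodes.subset fun _ h => hT.mem_of_pathNT h.2) ⟨hC.symm, huv⟩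
    fun _ ⟨hw, hvw⟩ => ⟨hw.trans hC.symm, huv.trans hvw⟩

lemma IsATree.chainRank_eq_zero (hT : T.IsATree) {v : V} {a : α} (hv : T.label v = some a) :
    T.chainRank v = 0 := by
  have hempty : T.sameClusterBelow v = ∅ := Set.eq_empty_of_forall_notMem fun u ⟨hC, hvu⟩ => by
    obtain ⟨w, huw, hw⟩ : a ∈ T.cluster u := by rw [hC]; exact ⟨v, .refl, hv⟩
    exact hT.pathNT_irrefl v (hvu.trans_left (hT.label_inj hw hv ▸ huw))
  rw [chainRank, hempty, Set.ncard_empty]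

lemma IsATree.path_iff_chainRank_le (hT : T.IsATree) {u v : V} (hv : v ∈ T.nodes)
    (hC : T.cluster u = T.cluster v) : T.path u v ↔ T.chainRank v ≤ T.chainRank u := by
  rcases eq_or_ne u v with rfl | hne
  · exact iff_of_true .refl le_rfl
  rcases hT.path_or_path_of_cluster_subset hv hC.ge with huv | hvu
  · exact iff_of_true huv (hT.chainRank_lt hC (pathNT_of_path_of_ne huv hne)).le
  · exact iff_of_false (fun huv => hne (hT.path_antisymm huv hvu))
      (hT.chainRank_lt hC.symm (pathNT_of_path_of_ne hvu hne.symm)).not_ge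

end ChainRank

/-- Each node `t` of `T` becomes the chain `(t, k) → ⋯ → (t, 0)`; the bottom copy `(t, 0)` keeps
the label of `t` and is the parent of the top copies `(t', k)` of the children `t'` of `t`. -/
def blowup (T : PreTree α U) (k : ℕ) : PreTree α (U × ℕ) where
  nodes := T.nodes ×ˢ Set.Iic k
  arc p q := p.2 ≤ k ∧
    ((p.1 = q.1 ∧ p.1 ∈ T.nodes ∧ p.2 = q.2 + 1) ∨ (p.2 = 0 ∧ q.2 = k ∧ T.arc p.1 q.1))
  label p := if p.2 = 0 then T.label p.1 else none

section Blowup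

variable {T : PreTree α U} {k : ℕ}

lemma blowup_path_chain {t : U} (ht : t ∈ T.nodes) {i j : ℕ} (hji : j ≤ i) (hik : i ≤ k) :
    (T.blowup k).path (t, i) (t, j) := by
  induction i, hji using Nat.le_induction with
  | base => exact .refl
  | succ i _ ih => exact .head (b := (t, i)) ⟨hik, Or.inl ⟨rfl, ht, rfl⟩⟩ (ih (by omega))

lemma IsATree.blowup_path_of_arc (hT : T.IsATree) {t t' : U} (h : T.arc t t') {i : ℕ}
    (hi : i ≤ k) : (T.blowup k).path (t, i) (t', k) :=
  (blowup_path_chain (hT.arc_mem_left h) (Nat.zero_le i) hi).tail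
    ⟨Nat.zero_le k, Or.inr ⟨rfl, rfl, h⟩⟩

lemma IsATree.blowup_path_of_pathNT (hT : T.IsATree) {t t' : U} (h : T.pathNT t t') {i j : ℕ}
    (hi : i ≤ k) (hj : j ≤ k) : (T.blowup k).path (t, i) (t', j) := by
  induction h using Relation.TransGen.head_induction_on generalizing i with
  | single h =>
    exact (hT.blowup_path_of_arc h hi).trans (blowup_path_chain (hT.arc_mem_right h) hj le_rfl)
  | head h _ ih => exact (hT.blowup_path_of_arc h hi).trans (ih le_rfl)

lemma IsATree.path_of_blowup_path (hT : T.IsATree) {p q : U × ℕ} (h : (T.blowup k).path p q) :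
    T.path p.1 q.1 ∧ (p.1 = q.1 → q.2 ≤ p.2) := by
  induction h using Relation.ReflTransGen.head_induction_on with
  | refl => exact ⟨.refl, fun _ => le_rfl⟩
  | head hpc _ ih =>
    obtain ⟨-, ⟨he, -, hi⟩ | ⟨-, -, harc⟩⟩ := hpc
    · refine ⟨he ▸ ih.1, fun hpq => ?_⟩
      have := ih.2 (he.symm.trans hpq)
      omega
    · exact ⟨.head harc ih.1, fun hpq => (hT.acyclic harc (hpq ▸ ih.1)).elim⟩

lemma IsATree.blowup_path_iff (hT : T.IsATree) {p q : U × ℕ} (hp : p ∈ (T.blowup k).nodes)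
    (hq : q ∈ (T.blowup k).nodes) :
    (T.blowup k).path p q ↔ T.path p.1 q.1 ∧ (p.1 = q.1 → q.2 ≤ p.2) := by
  refine ⟨hT.path_of_blowup_path, fun ⟨hpq, hle⟩ => ?_⟩
  obtain ⟨t, i⟩ := p
  obtain ⟨t', j⟩ := q
  rcases eq_or_ne t t' with rfl | hne
  · exact blowup_path_chain hp.1 (hle rfl) hp.2
  · exact hT.blowup_path_of_pathNT (pathNT_of_path_of_ne hpq hne) hp.2 hq.2

lemma IsATree.blowup_parent_unique (hT : T.IsATree) {p q r : U × ℕ} (hpr : (T.blowup k).arc p r)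
    (hqr : (T.blowup k).arc q r) : p = q := by
  obtain ⟨t₁, i₁⟩ := p
  obtain ⟨t₂, i₂⟩ := q
  obtain ⟨h₁, ⟨e₁, -, f₁⟩ | ⟨f₁, g₁, a₁⟩⟩ := hpr <;>
    obtain ⟨h₂, ⟨e₂, -, f₂⟩ | ⟨f₂, g₂, a₂⟩⟩ := hqr <;> dsimp only at *
  · exact Prod.ext (e₁.trans e₂.symm) (by omega)
  · omega
  · omega
  · exact Prod.ext (hT.parent_unique a₁ a₂) (by omega)

lemma IsATree.blowup_leaf_labeled (hT : T.IsATree) (p : U × ℕ) (hp : p ∈ (T.blowup k).nodes)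
    (hleaf : ∀ q, ¬ (T.blowup k).arc p q) : ∃ a, (T.blowup k).label p = some a := by
  obtain ⟨t, i⟩ := p
  obtain ⟨ht, hi⟩ := hp
  obtain rfl : i = 0 := by
    by_contra hne
    exact hleaf (t, i - 1) ⟨hi, Or.inl ⟨rfl, ht, by omega⟩⟩
  obtain ⟨a, ha⟩ := hT.leaf_labeled t ht fun t' h => hleaf (t', k) ⟨hi, Or.inr ⟨rfl, rfl, h⟩⟩
  exact ⟨a, by simpa [PreTree.blowup] using ha⟩

lemma IsATree.blowup (hT : T.IsATree) (k : ℕ) : (T.blowup k).IsATree where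
  finite_nodes := hT.finite_nodes.prod (Set.finite_Iic k)
  arc_mem_left := by
    rintro ⟨t, i⟩ _ ⟨hi, ⟨-, ht, -⟩ | ⟨-, -, h⟩⟩
    exacts [⟨ht, hi⟩, ⟨hT.arc_mem_left h, hi⟩]
  arc_mem_right := by
    rintro ⟨t, i⟩ ⟨t', j⟩ ⟨hi, ⟨he, ht, hij⟩ | ⟨-, hj, h⟩⟩ <;> dsimp only at *
    · exact ⟨he ▸ ht, Set.mem_Iic.2 (by omega)⟩
    · exact ⟨hT.arc_mem_right h, Set.mem_Iic.2 hj.le⟩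
  parent_unique := hT.blowup_parent_unique
  acyclic := by
    rintro p q hpq hqp
    obtain ⟨hqp, hle⟩ := hT.path_of_blowup_path hqp
    obtain ⟨-, ⟨he, -, hi⟩ | ⟨-, -, h⟩⟩ := hpq
    · have := hle he.symm
      omega
    · exact hT.acyclic h hqp
  rooted := by
    rintro ⟨p, hp⟩
    obtain ⟨r, hr, hroot⟩ := hT.rooted ⟨p.1, hp.1⟩
    have hr' : (r, k) ∈ (T.blowup k).nodes := ⟨hr, Set.mem_Iic.2 le_rfl⟩
    exact ⟨(r, k), hr', fun q hq =>
      (hT.blowup_path_iff hr' hq).2 ⟨hroot q.1 hq.1, fun _ => Set.mem_Iic.1 hq.2⟩⟩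
  label_mem := by
    rintro ⟨t, i⟩ a h
    dsimp only [PreTree.blowup] at h
    split_ifs at h with hi
    exact ⟨hT.label_mem h, by simp [hi]⟩
  label_inj := by
    rintro ⟨t, i⟩ ⟨t', j⟩ a h h'
    dsimp only [PreTree.blowup] at h h'
    split_ifs at h h' with hi hj
    rw [hT.label_inj h h', hi, hj]
  leaf_labeled := hT.blowup_leaf_labeled

end Blowup

lemma IsATree.isWTE_blowup [Nonempty U] {T : PreTree α U} {S : PreTree α V} {k : ℕ}
    (hT : T.IsATree) (hS : S.IsATree) (hd : Displays T S)
    (hk : ∀ v ∈ S.nodes, S.chainRank v ≤ k) :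
    IsWTE S (T.blowup k) fun v => (T.lowestCover (S.cluster v), S.chainRank v) := by
  have hc (v) (hv : v ∈ S.nodes) := hd.isLowestCover_lowestCover hT hS hv
  have hcl (v) (hv : v ∈ S.nodes) := (hc v hv).cluster_inter_labelSet hd hv
  have hmem (v) (hv : v ∈ S.nodes) :
      (T.lowestCover (S.cluster v), S.chainRank v) ∈ (T.blowup k).nodes := ⟨(hc v hv).1, hk v hv⟩
  refine ⟨hmem, fun u hu v hv huv => ?_, fun v a hv => ?_, fun u hu v hv => ?_⟩
  · obtain ⟨hcuv, hruv⟩ := Prod.mk.inj huv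
    have hC : S.cluster u = S.cluster v := by rw [← hcl u hu, ← hcl v hv, hcuv]
    exact hS.path_antisymm ((hS.path_iff_chainRank_le hv hC).2 hruv.ge)
      ((hS.path_iff_chainRank_le hu hC.symm).2 hruv.le)
  · show (if S.chainRank v = 0 then T.label (T.lowestCover (S.cluster v)) else none) = some a
    rw [if_pos (hS.chainRank_eq_zero hv)]
    exact (hc v (hS.label_mem hv)).label_eq hT hd hv
  refine Iff.trans ?_ (hT.blowup_path_iff (hmem u hu) (hmem v hv)).symm
  refine ⟨fun huv => ⟨?_, fun he => ?_⟩, ?_⟩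
  · exact (hc v hv).2.2 _ (hc u hu).1 ((cluster_subset_of_path huv).trans (hc u hu).2.1)
  · have hC : S.cluster u = S.cluster v := by
      rw [← hcl u hu, ← hcl v hv, show T.lowestCover (S.cluster u) = _ from he]
    exact (hS.path_iff_chainRank_le hv hC).1 huv
  · rintro ⟨huv, hle⟩
    have hsub : S.cluster v ⊆ S.cluster u := by
      rw [← hcl u hu, ← hcl v hv]
      exact Set.inter_subset_inter_left _ (cluster_subset_of_path huv)
    rcases hS.path_or_path_of_cluster_subset hv hsub with h | h
    · exact h
    · have hC : S.cluster u = S.cluster v := (cluster_subset_of_path h).antisymm hsub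
      exact (hS.path_iff_chainRank_le hv hC).2 (hle (by rw [hC]))

lemma ancCompat_of_displays {T : PreTree α U} {T₁ : PreTree α V} {T₂ : PreTree α W}
    (hT : T.IsATree) (h₁ : T₁.IsATree) (h₂ : T₂.IsATree) (hd₁ : Displays T T₁)
    (hd₂ : Displays T T₂) : AncCompat T₁ T₂ := by
  cases isEmpty_or_nonempty U with
  | inl hU =>
    exact ⟨PUnit, _, isATree_empty,
      ⟨_, isWTE_of_nodes_eq_empty h₁ (hd₁.nodes_eq_empty h₁) _ fun _ => ()⟩,
      ⟨_, isWTE_of_nodes_eq_empty h₂ (hd₂.nodes_eq_empty h₂) _ fun _ => ()⟩⟩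
  | inr hU =>
    have hk {X : Type} {S : PreTree α X} (hS : S.IsATree) (v : X) (hv : v ∈ S.nodes) :
        S.chainRank v ≤ S.nodes.ncard :=
      (hS.chainRank_lt_ncard hS.finite_nodes hv fun _ h => hS.mem_of_pathNT h.2).le
    exact ⟨U × ℕ, T.blowup (T₁.nodes.ncard + T₂.nodes.ncard), hT.blowup _,
      ⟨_, hT.isWTE_blowup h₁ hd₁ fun v hv => (hk h₁ v hv).trans (Nat.le_add_right _ _)⟩,
      ⟨_, hT.isWTE_blowup h₂ hd₂ fun v hv => (hk h₂ v hv).trans (Nat.le_add_left _ _)⟩⟩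

end PreTree

/-- Two 𝒜-trees are ancestrally compatible (some 𝒜-tree ancestrally displays
both) iff they admit weak topological embeddings into a same 𝒜-tree. -/
theorem stmt11 {α V W : Type} (T₁ : PreTree α V) (T₂ : PreTree α W)
    (h₁ : T₁.IsATree) (h₂ : T₂.IsATree) :
    (∃ (U : Type) (T : PreTree α U), T.IsATree ∧
        PreTree.Displays T T₁ ∧ PreTree.Displays T T₂) ↔
      PreTree.AncCompat T₁ T₂ := by
  constructor
  · rintro ⟨U, T, hT, hd₁, hd₂⟩
    exact PreTree.ancCompat_of_displays hT h₁ h₂ hd₁ hd₂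
  · rintro ⟨U, T, hT, ⟨f, hf⟩, ⟨g, hg⟩⟩
    exact ⟨U, T, hT, hf.displays hT h₁, hg.displays hT h₂⟩
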